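/- arXiv:2411.08245 — 4 statements merged into one kernel-verified Lean document; each statement's English description precedes it below -/
import Mathlib

section
/- If Δ is a pure strongly connected d-dimensional simplicial complex whose vertex set is [n] with a unit interval order, then the lexicographic order on the facets of Δ is a shelling order. -/
open Finset

/-- A simplicial complex on vertex set `ℕ`, given as the finite family of all of its
faces, closed under taking subsets. -/
def IsComplex (Δ : Finset (Finset ℕ)) : Prop :=
  ∀ F ∈ Δ, ∀ G ⊆ F, G ∈ Δ

/-- `F` is a facet (maximal face) of `Δ`. -/
def IsFacet (Δ : Finset (Finset ℕ)) (F : Finset ℕ) : Prop :=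
  F ∈ Δ ∧ ∀ G ∈ Δ, F ⊆ G → F = G

/-- The finset of facets of `Δ`. -/
def facets (Δ : Finset (Finset ℕ)) : Finset (Finset ℕ) :=
  Δ.filter fun F => ∀ G ∈ Δ, F ⊆ G → F = G

/-- `Δ` is pure of dimension `d`: every facet has `d + 1` vertices. -/
def IsPure (d : ℕ) (Δ : Finset (Finset ℕ)) : Prop :=
  ∀ F, IsFacet Δ F → F.card = d + 1

/-- Dual graph of a pure `d`-dimensional complex: nodes are facets, two facets are
adjacent iff they share a face with `d` elements (a codimension-one face). -/
def dualGraph (d : ℕ) (Δ : Finset (Finset ℕ)) : SimpleGraph {F // F ∈ facets Δ} :=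
  SimpleGraph.fromRel fun F G => ((F : Finset ℕ) ∩ (G : Finset ℕ)).card = d

/-- `Δ` is strongly connected: its dual graph is connected. -/
def StronglyConnected (d : ℕ) (Δ : Finset (Finset ℕ)) : Prop :=
  (dualGraph d Δ).Connected

/-- The labeling of the vertices by `ℕ` is a unit interval order: whenever
`F = {v₀ < v₁ < ⋯ < v_d}` is a facet, every `(d+1)`-element subset of the integer
interval `{v₀, v₀+1, …, v_d}` is a facet. -/
def UnitIntervalOrder (d : ℕ) (Δ : Finset (Finset ℕ)) : Prop :=
  ∀ F, IsFacet Δ F → ∀ hF : F.Nonempty,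
    ∀ S ⊆ Finset.Icc (F.min' hF) (F.max' hF), S.card = d + 1 → IsFacet Δ S

/-- The increasing list of the vertices of a face. -/
def sortedList (F : Finset ℕ) : List ℕ := F.sort (· ≤ ·)

/-- Lexicographic order on faces, comparing the increasing lists of vertices. -/
def faceLexLt (F G : Finset ℕ) : Prop :=
  List.Lex (· < ·) (sortedList F) (sortedList G)

/-- `L` lists exactly the facets of `Δ`, in lexicographic order. -/
def LexFacetList (Δ : Finset (Finset ℕ)) (L : List (Finset ℕ)) : Prop :=
  L.Nodup ∧ L.toFinset = facets Δ ∧ L.Pairwise faceLexLt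

/-- `L` is a shelling order of the pure `d`-dimensional complex `Δ`: it lists the
facets of `Δ` so that for each `k`, the intersection of `⟨L[k+1]⟩` with
`⟨L[0], …, L[k]⟩` is pure of dimension `d - 1`, i.e. it is nonempty and each of
its faces is contained in a common `d`-element face of `L[k+1]` and some earlier
facet. -/
def IsShellingOrder (d : ℕ) (Δ : Finset (Finset ℕ)) (L : List (Finset ℕ)) : Prop :=
  L.Nodup ∧ L.toFinset = facets Δ ∧
  ∀ (k : ℕ) (hk : k + 1 < L.length),
    (∃ τ ⊆ L.get ⟨k + 1, hk⟩, τ.card = d ∧ ∃ G ∈ L.take (k + 1), τ ⊆ G) ∧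
    (∀ σ ⊆ L.get ⟨k + 1, hk⟩, (∃ G ∈ L.take (k + 1), σ ⊆ G) →
      ∃ τ, σ ⊆ τ ∧ τ ⊆ L.get ⟨k + 1, hk⟩ ∧ τ.card = d ∧ ∃ G ∈ L.take (k + 1), τ ⊆ G)

/-- `Δ` is shellable (as a pure `d`-dimensional complex). -/
def Shellable (d : ℕ) (Δ : Finset (Finset ℕ)) : Prop :=
  ∃ L, IsShellingOrder d Δ L

/-- The link of the vertex `v` in `Δ`. -/
def linkC (Δ : Finset (Finset ℕ)) (v : ℕ) : Finset (Finset ℕ) :=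
  Δ.filter fun E => v ∉ E ∧ insert v E ∈ Δ

/-- The deletion of the vertex `v` from `Δ`. -/
def delC (Δ : Finset (Finset ℕ)) (v : ℕ) : Finset (Finset ℕ) :=
  Δ.filter fun E => v ∉ E

/-- Vertex decomposability: `Δ` is a simplex (possibly the void/empty simplex `{∅}`),
or it has a shedding vertex `v` whose link and deletion are vertex decomposable and
such that every facet of the deletion is a facet of `Δ`. -/
inductive VertexDecomposable : Finset (Finset ℕ) → Prop
  | simplex (V : Finset ℕ) : VertexDecomposable V.powerset
  | shed (Δ : Finset (Finset ℕ)) (v : ℕ) :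
      VertexDecomposable (linkC Δ v) → VertexDecomposable (delC Δ v) →
      (∀ F, IsFacet (delC Δ v) F → IsFacet Δ F) → VertexDecomposable Δ

/-!
Let `G` precede `F` lexicographically, `σ ⊆ F ∩ G`, and let `m ∈ G \ F` be the first vertex in
which they differ. It suffices to exchange some `v ∈ F \ σ` for a smaller `w ∉ F` so that the
result lies within the span `[min V, max V]` of a facet `V`: the unit interval property makes it
an earlier facet, sharing with `F` the ridge `F \ {v} ⊇ σ`.
If `min F < m`, exchange a vertex of `F \ σ` above `m` for `m` (it exists as `F ⊄ G`).
If `m < min F` and `max F ∈ σ ⊆ G`, exchange any vertex of `F \ σ` for `m`, inside the span of `G`.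
Otherwise exchange `max F`: for a gap of `F` if there is one; if `F = {v₀, …, v₀ + d}`, a path
in the dual graph from `G` to `F` crosses from a facet `A` with a vertex `a < v₀` to one without,
so `A` shares `d` vertices `≥ v₀` with its neighbour, and `max F` can be exchanged for `a`.
-/

theorem List.Pairwise.mem_take_iff {α : Type*} {r : α → α → Prop} (hr : ∀ a b, r a b → ¬ r b a)
    {L : List α} (hL : L.Pairwise r) {k : ℕ} (hk : k < L.length) {a : α} (ha : a ∈ L) :
    a ∈ L.take k ↔ r a L[k] := by
  rw [List.pairwise_iff_getElem] at hL
  obtain ⟨i, hi, rfl⟩ := List.getElem_of_mem ha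
  rw [List.mem_take_iff_getElem]
  constructor
  · rintro ⟨j, hj, hji⟩
    exact hji ▸ hL j k (by omega) hk (by omega)
  · intro hik
    refine ⟨i, ?_, rfl⟩
    rcases lt_trichotomy i k with h | rfl | h
    · omega
    · exact absurd hik (hr _ _ hik)
    · exact absurd (hL k i hk hi h) (hr _ _ hik)

theorem mem_facets {Δ : Finset (Finset ℕ)} {F : Finset ℕ} : F ∈ facets Δ ↔ IsFacet Δ F := by
  simp [facets, IsFacet]

theorem sortedList_eq_cons {F : Finset ℕ} (h : F.Nonempty) :
    sortedList F = F.min' h :: sortedList (F.erase (F.min' h)) := by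
  conv_lhs => rw [sortedList, ← insert_erase (F.min'_mem h)]
  exact sort_insert _ (fun b hb => F.min'_le b (mem_of_mem_erase hb)) (notMem_erase _ _)

theorem faceLexLt_iff {F G : Finset ℕ} (hcard : F.card = G.card) :
    faceLexLt F G ↔ ∃ m ∈ F, m ∉ G ∧ ∀ x < m, (x ∈ F ↔ x ∈ G) := by
  induction hF : F.card generalizing F G with
  | zero =>
    obtain rfl := card_eq_zero.1 hF
    obtain rfl := card_eq_zero.1 (hcard ▸ hF)
    simp [faceLexLt, sortedList]
  | succ n ih =>
    have hFne : F.Nonempty := card_pos.1 (by omega)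
    have hGne : G.Nonempty := card_pos.1 (by omega)
    rw [faceLexLt, sortedList_eq_cons hFne, sortedList_eq_cons hGne]
    have haF := F.min'_mem hFne
    have hbG := G.min'_mem hGne
    have haF_le : ∀ x ∈ F, F.min' hFne ≤ x := F.min'_le
    have hbG_le : ∀ x ∈ G, G.min' hGne ≤ x := G.min'_le
    generalize F.min' hFne = a at *
    generalize G.min' hGne = b at *
    rcases lt_trichotomy a b with hab | rfl | hab
    · refine iff_of_true (.rel hab) ⟨a, haF, fun h => ?_, fun x hx => ?_⟩
      · exact absurd (hbG_le a h) (not_le.2 hab)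
      · exact iff_of_false (fun h => by have := haF_le x h; omega)
          (fun h => by have := hbG_le x h; omega)
    · rw [List.lex_cons_iff, ← faceLexLt,
        ih (by rw [card_erase_of_mem haF, card_erase_of_mem hbG, hcard])
          (by rw [card_erase_of_mem haF, hF]; rfl)]
      constructor
      · rintro ⟨m, hmF, hmG, hbelow⟩
        refine ⟨m, mem_of_mem_erase hmF, fun h => hmG (mem_erase.2 ⟨ne_of_mem_erase hmF, h⟩),
          fun x hx => ?_⟩
        by_cases hxa : x = a
        · exact hxa ▸ iff_of_true haF hbG
        · simpa [hxa] using hbelow x hx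
      · rintro ⟨m, hmF, hmG, hbelow⟩
        refine ⟨m, mem_erase.2 ⟨fun h => hmG (h ▸ hbG), hmF⟩, fun h => hmG (mem_of_mem_erase h),
          fun x hx => ?_⟩
        simp only [mem_erase, hbelow x hx]
    · refine iff_of_false (fun h => ?_) fun ⟨m, hmF, hmG, hbelow⟩ => ?_
      · cases h <;> omega
      · have := haF_le m hmF
        have := haF_le b ((hbelow b (by omega)).2 hbG)
        omega

theorem faceLexLt_asymm {F G : Finset ℕ} (h : faceLexLt F G) : ¬ faceLexLt G F :=
  (List.Lex.asymm (· < ·)).asymm _ _ h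

theorem faceLexLt_irrefl (F : Finset ℕ) : ¬ faceLexLt F F :=
  fun h => faceLexLt_asymm h h

def LiesInEarlierRidge (d : ℕ) (Δ : Finset (Finset ℕ)) (F σ : Finset ℕ) : Prop :=
  ∃ τ, σ ⊆ τ ∧ τ ⊆ F ∧ τ.card = d ∧ ∃ H, IsFacet Δ H ∧ faceLexLt H F ∧ τ ⊆ H

section Ridge

variable {d : ℕ} {Δ : Finset (Finset ℕ)} {F σ V : Finset ℕ} {a b v w : ℕ}

/-- The exchanged face is a facet by the unit interval property, and it precedes `F` because the
first vertex where they differ is `w`. -/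
theorem liesInEarlierRidge_of_exchange (hU : UnitIntervalOrder d Δ) (hFc : F.card = d + 1)
    (hσF : σ ⊆ F) (hV : IsFacet Δ V) (hVne : V.Nonempty) (hv : v ∈ F) (hvσ : v ∉ σ)
    (hw : w ∉ F) (hwv : w < v) (hspan : insert w (F.erase v) ⊆ Icc (V.min' hVne) (V.max' hVne)) :
    LiesInEarlierRidge d Δ F σ := by
  have hwe : w ∉ F.erase v := fun h => hw (mem_of_mem_erase h)
  have hτc : (F.erase v).card = d := by rw [card_erase_of_mem hv, hFc]; rfl
  refine ⟨F.erase v, fun x hx => mem_erase.2 ⟨fun h => hvσ (h ▸ hx), hσF hx⟩,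
    erase_subset _ _, hτc, insert w (F.erase v), ?_, ?_, subset_insert _ _⟩
  · exact hU V hV hVne _ hspan (by rw [card_insert_of_notMem hwe, hτc])
  · rw [faceLexLt_iff (by rw [card_insert_of_notMem hwe, hτc, hFc])]
    refine ⟨w, mem_insert_self _ _, hw, fun x hx => ?_⟩
    simp only [mem_insert, mem_erase]
    constructor
    · rintro (rfl | ⟨-, hxF⟩)
      · omega
      · exact hxF
    · exact fun hxF => Or.inr ⟨by omega, hxF⟩

theorem liesInEarlierRidge_of_gap (hU : UnitIntervalOrder d Δ) (hF : IsFacet Δ F)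
    (hFc : F.card = d + 1) (hσF : σ ⊆ F) (ha : a ∈ F) (haw : a < w) (hw : w ∉ F) (hv : v ∈ F)
    (hvσ : v ∉ σ) (hwv : w < v) : LiesInEarlierRidge d Δ F σ := by
  have hFne : F.Nonempty := ⟨a, ha⟩
  refine liesInEarlierRidge_of_exchange hU hFc hσF hF hFne hv hvσ hw hwv
    (insert_subset_iff.2 ⟨?_, fun x hx => ?_⟩)
  · have := F.min'_le a ha
    have := F.le_max' v hv
    exact mem_Icc.2 ⟨by omega, by omega⟩
  · exact mem_Icc.2 ⟨F.min'_le x (mem_of_mem_erase hx), F.le_max' x (mem_of_mem_erase hx)⟩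

theorem liesInEarlierRidge_of_lt_forall (hU : UnitIntervalOrder d Δ) (hFc : F.card = d + 1)
    (hσF : σ ⊆ F) (hV : IsFacet Δ V) (ha : a ∈ V) (hb : b ∈ V) (haF : ∀ x ∈ F, a < x)
    (hv : v ∈ F) (hvσ : v ∉ σ) (hbF : ∀ x ∈ F.erase v, x ≤ b) : LiesInEarlierRidge d Δ F σ := by
  have hVne : V.Nonempty := ⟨a, ha⟩
  refine liesInEarlierRidge_of_exchange hU hFc hσF hV hVne hv hvσ (fun h => (haF a h).false)
    (haF v hv) (insert_subset_iff.2 ⟨mem_Icc.2 ⟨V.min'_le a ha, V.le_max' a ha⟩, fun x hx => ?_⟩)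
  have := V.min'_le a ha
  have := V.le_max' b hb
  have := haF x (mem_of_mem_erase hx)
  have := hbF x hx
  exact mem_Icc.2 ⟨by omega, by omega⟩

end Ridge

theorem exists_facet_crossing {d : ℕ} {Δ : Finset (Finset ℕ)} (hSC : StronglyConnected d Δ)
    {F G : Finset ℕ} (hF : IsFacet Δ F) (hG : IsFacet Δ G) {t m : ℕ} (hFt : ∀ x ∈ F, t ≤ x)
    (hmG : m ∈ G) (hmt : m < t) :
    ∃ A, IsFacet Δ A ∧ (∃ a ∈ A, a < t) ∧ d ≤ (A.filter (t ≤ ·)).card := by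
  obtain ⟨W⟩ := hSC.preconnected ⟨G, mem_facets.2 hG⟩ ⟨F, mem_facets.2 hF⟩
  obtain ⟨e, -, hA, hB⟩ := W.exists_boundary_dart {X | ∃ a ∈ X.1, a < t} ⟨m, hmG, hmt⟩
    fun ⟨x, hx, hxt⟩ => (hFt x hx).not_gt hxt
  have hAB : (e.fst.1 ∩ e.snd.1).card = d := by
    have := e.adj
    simp only [dualGraph, SimpleGraph.fromRel_adj, inter_comm e.snd.1] at this
    exact this.2.elim id id
  refine ⟨e.fst, mem_facets.1 e.fst.2, hA, hAB.symm.trans_le (card_le_card fun x hx => ?_)⟩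
  rw [mem_inter] at hx
  exact mem_filter.2 ⟨hx.1, not_lt.1 fun hxt => hB ⟨x, hx.2, hxt⟩⟩

section Shelling

variable {d : ℕ} {Δ : Finset (Finset ℕ)} {F G σ : Finset ℕ}

theorem liesInEarlierRidge_of_lt_min (hSC : StronglyConnected d Δ) (hU : UnitIntervalOrder d Δ)
    (hF : IsFacet Δ F) (hFc : F.card = d + 1) (hFne : F.Nonempty) (hG : IsFacet Δ G)
    (hσF : σ ⊆ F) (hσG : σ ⊆ G) (hFG : ¬ F ⊆ G) {m : ℕ} (hmG : m ∈ G) (hm : m < F.min' hFne) :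
    LiesInEarlierRidge d Δ F σ := by
  have hmin : ∀ x ∈ F, F.min' hFne ≤ x := F.min'_le
  have hmax : ∀ x ∈ F, x ≤ F.max' hFne := F.le_max'
  by_cases hmaxσ : F.max' hFne ∈ σ
  · obtain ⟨v, hvF, hvσ⟩ := not_subset.1 fun h => hFG (h.trans hσG)
    exact liesInEarlierRidge_of_lt_forall hU hFc hσF hG hmG (hσG hmaxσ)
      (fun x hx => hm.trans_le (hmin x hx)) hvF hvσ fun x hx => hmax x (mem_of_mem_erase hx)
  by_cases hgap : ∃ w ∉ F, F.min' hFne < w ∧ w < F.max' hFne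
  · obtain ⟨w, hwF, hminw, hwmax⟩ := hgap
    exact liesInEarlierRidge_of_gap hU hF hFc hσF (F.min'_mem hFne) hminw hwF
      (F.max'_mem hFne) hmaxσ hwmax
  -- Now `F = {v₀, …, v₀ + d}`. Strong connectivity yields a facet `A` with a vertex below `v₀`
  -- and `d` vertices at least `v₀`, so the span of `A` contains `F` minus its top vertex.
  have hIcc : Icc (F.min' hFne) (F.max' hFne) ⊆ F := fun x hx => by
    by_contra hxF
    rw [mem_Icc] at hx
    exact hgap ⟨x, hxF, lt_of_le_of_ne hx.1 (fun h => hxF (h ▸ F.min'_mem hFne)),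
      lt_of_le_of_ne hx.2 (fun h => hxF (h ▸ F.max'_mem hFne))⟩
  have hFlen := card_le_card hIcc
  obtain ⟨A, hA, ⟨a, haA, ha⟩, hAc⟩ := exists_facet_crossing hSC hF hG hmin hmG hm
  have hAne : A.Nonempty := ⟨a, haA⟩
  have hAlen := hAc.trans <| card_le_card (s := A.filter (F.min' hFne ≤ ·))
    (t := Icc (F.min' hFne) (A.max' hAne)) fun x hx =>
      mem_Icc.2 ⟨(mem_filter.1 hx).2, A.le_max' x (mem_filter.1 hx).1⟩
  rw [Nat.card_Icc] at hFlen hAlen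
  refine liesInEarlierRidge_of_lt_forall hU hFc hσF hA haA (A.max'_mem hAne)
    (fun x hx => ha.trans_le (hmin x hx)) (F.max'_mem hFne) hmaxσ fun x hx => ?_
  have := hmin x (mem_of_mem_erase hx)
  have := hmax x (mem_of_mem_erase hx)
  have := ne_of_mem_erase hx
  omega

theorem liesInEarlierRidge_of_faceLexLt (hP : IsPure d Δ) (hSC : StronglyConnected d Δ)
    (hU : UnitIntervalOrder d Δ) (hF : IsFacet Δ F) (hG : IsFacet Δ G) (hGF : faceLexLt G F)
    (hσF : σ ⊆ F) (hσG : σ ⊆ G) : LiesInEarlierRidge d Δ F σ := by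
  have hFc := hP F hF
  obtain ⟨m, hmG, hmF, hbelow⟩ := (faceLexLt_iff (by rw [hP G hG, hFc])).1 hGF
  have hFG : ¬ F ⊆ G := fun h => faceLexLt_irrefl F (hF.2 G hG.1 h ▸ hGF)
  have hFne : F.Nonempty := card_pos.1 (by omega)
  have hm_ne : m ≠ F.min' hFne := fun h => hmF (h ▸ F.min'_mem hFne)
  rcases lt_or_gt_of_ne hm_ne with hm | hm
  · exact liesInEarlierRidge_of_lt_min hSC hU hF hFc hFne hG hσF hσG hFG hmG hm
  · obtain ⟨v, hvF, hvσ, hmv⟩ : ∃ v ∈ F, v ∉ σ ∧ m < v := by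
      by_contra! h
      refine hFG fun x hx => ?_
      by_cases hxσ : x ∈ σ
      · exact hσG hxσ
      · exact (hbelow x (lt_of_le_of_ne (h x hx hxσ) fun h => hmF (h ▸ hx))).2 hx
    exact liesInEarlierRidge_of_gap hU hF hFc hσF (F.min'_mem hFne) hm hmF hvF hvσ hmv

end Shelling

theorem stmt0_general (d : ℕ) (Δ : Finset (Finset ℕ))
    (hP : IsPure d Δ) (hSC : StronglyConnected d Δ)
    (hU : UnitIntervalOrder d Δ)
    (L : List (Finset ℕ)) (hL : LexFacetList Δ L) :
    IsShellingOrder d Δ L := by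
  obtain ⟨hnd, hset, hsort⟩ := hL
  have hmem : ∀ {X}, X ∈ L ↔ IsFacet Δ X := by
    intro X
    rw [← List.mem_toFinset, hset, mem_facets]
  refine ⟨hnd, hset, fun k hk => ?_⟩
  have hearlier : ∀ {H}, IsFacet Δ H → (H ∈ L.take (k + 1) ↔ faceLexLt H (L.get ⟨k + 1, hk⟩)) :=
    fun hH => hsort.mem_take_iff (fun _ _ => faceLexLt_asymm) hk (hmem.2 hH)
  have hridge : ∀ σ ⊆ L.get ⟨k + 1, hk⟩, (∃ G ∈ L.take (k + 1), σ ⊆ G) →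
      ∃ τ, σ ⊆ τ ∧ τ ⊆ L.get ⟨k + 1, hk⟩ ∧ τ.card = d ∧ ∃ G ∈ L.take (k + 1), τ ⊆ G := by
    rintro σ hσF ⟨G, hG, hσG⟩
    have hGfac := hmem.1 (List.mem_of_mem_take hG)
    obtain ⟨τ, hστ, hτF, hτc, H, hH, hHF, hτH⟩ := liesInEarlierRidge_of_faceLexLt hP hSC hU
      (hmem.1 (List.get_mem _ _)) hGfac ((hearlier hGfac).1 hG) hσF hσG
    exact ⟨τ, hστ, hτF, hτc, H, (hearlier hH).2 hHF, hτH⟩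
  obtain ⟨τ, -, hτ⟩ := hridge ∅ (empty_subset _)
    ⟨L[0], List.mem_take_iff_getElem.2 ⟨0, by omega, rfl⟩, empty_subset _⟩
  exact ⟨⟨τ, hτ⟩, hridge⟩

theorem stmt0 (n d : ℕ) (Δ : Finset (Finset ℕ))
    (hC : IsComplex Δ) (hP : IsPure d Δ) (hSC : StronglyConnected d Δ)
    (hU : UnitIntervalOrder d Δ) (hV : Δ.sup id ⊆ Finset.Icc 1 n)
    (L : List (Finset ℕ)) (hL : LexFacetList Δ L) :
    IsShellingOrder d Δ L :=
  stmt0_general d Δ hP hSC hU L hL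
end

section
/- Let Δ be a pure strongly connected d-dimensional simplicial complex on [n] with a unit interval order, n > d+1, and let j be the smallest vertex appearing in a facet containing n. Then link_Δ(n) equals the (d-1)-skeleton of the simplex on vertex set {j, j+1, ..., n-1}, i.e., its facets are exactly the d-element subsets of {j,...,n-1}. -/
open Finset

/-! A facet of `Δ` containing `n` lies in `[j, n]`, and the unit interval order applied to one
such facet with extreme vertices `j` and `n` makes every `(d+1)`-subset of `[j, n]` a facet.
So the facets through `n` are exactly the sets `{n} ∪ T` with `T` a `d`-subset of
`[j, n - 1]`. -/

lemma exists_isFacet_superset {Δ : Finset (Finset ℕ)} {F : Finset ℕ} (hF : F ∈ Δ) :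
    ∃ G, IsFacet Δ G ∧ F ⊆ G := by
  obtain ⟨G, hG, hmax⟩ := {G ∈ Δ | F ⊆ G}.exists_max_image card ⟨F, mem_filter.2 ⟨hF, rfl.subset⟩⟩
  rw [mem_filter] at hG
  refine ⟨G, ⟨hG.1, fun G' hG' hGG' => ?_⟩, hG.2⟩
  exact eq_of_subset_of_card_le hGG' (hmax G' (mem_filter.2 ⟨hG', hG.2.trans hGG'⟩))

lemma linkC_eq_skeleton {Δ : Finset (Finset ℕ)} {d v : ℕ} {W : Finset ℕ}
    (hC : IsComplex Δ) (hP : IsPure d Δ) (hvW : v ∉ W) (hdW : d ≤ W.card)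
    (hfacet : ∀ G, IsFacet Δ G → v ∈ G → G ⊆ insert v W)
    (hface : ∀ T ⊆ W, T.card = d → insert v T ∈ Δ) :
    linkC Δ v = W.powerset.filter fun S => S.card ≤ d := by
  ext E
  simp only [linkC, mem_filter, mem_powerset]
  constructor
  · rintro ⟨-, hvE, hvEΔ⟩
    obtain ⟨G, hG, hEG⟩ := exists_isFacet_superset hvEΔ
    have hvG : v ∈ G := hEG (mem_insert_self v E)
    refine ⟨(subset_insert_iff_of_notMem hvE).1 ((subset_insert v E).trans (hEG.trans
      (hfacet G hG hvG))), ?_⟩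
    have := card_le_card hEG
    rw [card_insert_of_notMem hvE, hP G hG] at this
    omega
  · rintro ⟨hEW, hEd⟩
    obtain ⟨T, hET, hTW, hTd⟩ := exists_subsuperset_card_eq hEW hEd hdW
    have hvTΔ := hface T hTW hTd
    exact ⟨hC _ hvTΔ E (hET.trans (subset_insert v T)), fun hvE => hvW (hEW hvE),
      hC _ hvTΔ _ (insert_subset_insert v hET)⟩

theorem stmt5_general (n d j : ℕ) (Δ : Finset (Finset ℕ))
    (hC : IsComplex Δ) (hP : IsPure d Δ)
    (hU : UnitIntervalOrder d Δ) (hV : Δ.sup id = Finset.Icc 1 n)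
    (hj : IsLeast {v : ℕ | ∃ F, IsFacet Δ F ∧ n ∈ F ∧ v ∈ F} j) :
    linkC Δ n = (Finset.Icc j (n - 1)).powerset.filter fun S => S.card ≤ d := by
  obtain ⟨⟨F, hF, hnF, hjF⟩, hj_le⟩ := hj
  have hvertex : ∀ E ∈ Δ, E ⊆ Icc 1 n := fun E hE => hV ▸ le_sup (f := id) hE
  have hfacet : ∀ G, IsFacet Δ G → n ∈ G → G ⊆ Icc j n := fun G hG hnG x hx =>
    mem_Icc.2 ⟨hj_le ⟨G, hG, hnG, hx⟩, (mem_Icc.1 (hvertex G hG.1 hx)).2⟩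
  have hmin : F.min' ⟨n, hnF⟩ = j :=
    le_antisymm (min'_le _ _ hjF) (hj_le ⟨F, hF, hnF, min'_mem _ _⟩)
  have hmax : F.max' ⟨n, hnF⟩ = n :=
    le_antisymm (mem_Icc.1 (hfacet F hF hnF (max'_mem _ _))).2 (le_max' _ _ hnF)
  have hIcc : insert n (Icc j (n - 1)) = Icc j n :=
    insert_Icc_sub_one_right_eq_Icc (mem_Icc.1 (hfacet F hF hnF hnF)).1
  have hn : 1 ≤ n := (mem_Icc.1 (hvertex F hF.1 hnF)).1
  have hnW : n ∉ Icc j (n - 1) := fun h => by have := (mem_Icc.1 h).2; omega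
  refine linkC_eq_skeleton hC hP hnW ?_ (fun G hG hnG => hIcc ▸ hfacet G hG hnG) ?_
  · have := card_le_card (hfacet F hF hnF)
    rw [hP F hF, ← hIcc, card_insert_of_notMem hnW] at this
    omega
  · intro T hTW hTd
    refine (hU F hF ⟨n, hnF⟩ _ ?_ ?_).1
    · rw [hmin, hmax, ← hIcc]
      exact insert_subset_insert n hTW
    · rw [card_insert_of_notMem (fun h => hnW (hTW h)), hTd]

theorem stmt5 (n d j : ℕ) (Δ : Finset (Finset ℕ))
    (hC : IsComplex Δ) (hP : IsPure d Δ) (hSC : StronglyConnected d Δ)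
    (hU : UnitIntervalOrder d Δ) (hV : Δ.sup id = Finset.Icc 1 n)
    (hn : d + 1 < n)
    (hj : IsLeast {v : ℕ | ∃ F, IsFacet Δ F ∧ n ∈ F ∧ v ∈ F} j) :
    linkC Δ n = (Finset.Icc j (n - 1)).powerset.filter fun S => S.card ≤ d :=
  stmt5_general n d j Δ hC hP hU hV hj
end

section
/- In the pure d-dimensional complex Δ on [d+3] with facets {1,...,d+1}, {1,...,d}∪{d+2}, {1,...,d}∪{d+3}, {2,...,d+2}, {3,...,d+3} (for d ≥ 2), the link of the vertex d+3 is the complex with exactly two facets {1,...,d} and {3,...,d+2}, which share a face of size d-2; hence this link is not shellable. -/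
open Finset

/-- The simplicial complex generated by a finite family of faces. -/
def genComplex (S : Finset (Finset ℕ)) : Finset (Finset ℕ) := S.sup Finset.powerset

/-- The pure `d`-dimensional complex on `[d+3]` with facets `{1, …, d, d+1}`,
`{1, …, d, d+2}`, `{1, …, d, d+3}`, `{2, …, d+1, d+2}` and `{3, …, d+2, d+3}`. -/
def intervalExample (d : ℕ) : Finset (Finset ℕ) :=
  genComplex {Finset.Icc 1 (d + 1), insert (d + 2) (Finset.Icc 1 d),
    insert (d + 3) (Finset.Icc 1 d), Finset.Icc 2 (d + 2), Finset.Icc 3 (d + 3)}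


open Finset

/-!
The link of `d + 3` is generated by the facets through `d + 3` with that vertex removed, namely
`{1, …, d}` and `{3, …, d + 2}`. These two facets meet in `{3, …, d}`, which has only `d - 2`
elements, while the second facet of any shelling order must meet the first in a face of
size `d - 1`.
-/

lemma mem_genComplex {S : Finset (Finset ℕ)} {E : Finset ℕ} :
    E ∈ genComplex S ↔ ∃ F ∈ S, E ⊆ F := by
  simp [genComplex]

lemma genComplex_pair (A B : Finset ℕ) : genComplex {A, B} = A.powerset ∪ B.powerset := by
  simp [genComplex, sup_eq_union]

lemma linkC_genComplex (S : Finset (Finset ℕ)) (v : ℕ) :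
    linkC (genComplex S) v = genComplex ((S.filter (v ∈ ·)).image (·.erase v)) := by
  ext E
  simp only [linkC, mem_filter, mem_genComplex, mem_image, exists_exists_and_eq_and,
    subset_erase, insert_subset_iff]
  constructor
  · rintro ⟨-, hv, F, hF, hvF, hEF⟩
    exact ⟨F, ⟨hF, hvF⟩, hEF, hv⟩
  · rintro ⟨F, ⟨hF, hvF⟩, hEF, hv⟩
    exact ⟨⟨F, hF, hEF⟩, hv, F, hF, hvF, hEF⟩

lemma facets_powerset_union_powerset {A B : Finset ℕ} (hAB : ¬ A ⊆ B) (hBA : ¬ B ⊆ A) :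
    facets (A.powerset ∪ B.powerset) = {A, B} := by
  ext F
  simp only [facets, mem_filter, mem_union, mem_powerset, mem_insert, mem_singleton]
  constructor
  · rintro ⟨hF | hF, hmax⟩
    · exact .inl (hmax A (.inl subset_rfl) hF)
    · exact .inr (hmax B (.inr subset_rfl) hF)
  · rintro (rfl | rfl)
    · refine ⟨.inl subset_rfl, fun G hG hFG => ?_⟩
      rcases hG with hG | hG
      · exact subset_antisymm hFG hG
      · exact absurd (hFG.trans hG) hAB
    · refine ⟨.inr subset_rfl, fun G hG hFG => ?_⟩
      rcases hG with hG | hG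
      · exact absurd (hFG.trans hG) hBA
      · exact subset_antisymm hFG hG

lemma not_shellable_of_facets_eq_pair {d : ℕ} {Δ : Finset (Finset ℕ)} {A B : Finset ℕ}
    (hfac : facets Δ = {A, B}) (hAB : A ≠ B) (hcard : (A ∩ B).card < d) :
    ¬ Shellable d Δ := by
  rintro ⟨L, hnd, hL, hshell⟩
  rw [hfac] at hL
  have hlen : L.length = 2 := by
    rw [← List.toFinset_card_of_nodup hnd, hL, card_pair hAB]
  obtain ⟨a, b, rfl⟩ : ∃ a b, L = [a, b] := by
    match L, hlen with
    | [a, b], _ => exact ⟨a, b, rfl⟩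
  obtain ⟨⟨τ, hτb, hτcard, G, hG, hτG⟩, -⟩ := hshell 0 (by simp)
  have hτa : τ ⊆ a := by
    rw [List.take_one, List.head?_cons, Option.toList_some, List.mem_singleton] at hG
    exact hG ▸ hτG
  -- the intersection of the facets does not depend on the order in which they are listed
  have hinter : a ∩ b = A ∩ B := by
    ext x
    simpa using congrArg (fun s : Finset (Finset ℕ) => ∀ F ∈ s, x ∈ F) hL
  have : τ.card ≤ (A ∩ B).card := hinter ▸ card_le_card (subset_inter hτa hτb)
  omega

lemma linkC_intervalExample (d : ℕ) :
    linkC (intervalExample d) (d + 3) =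
      (Icc 1 d).powerset ∪ (Icc 3 (d + 2)).powerset := by
  have hfilter : ({Icc 1 (d + 1), insert (d + 2) (Icc 1 d), insert (d + 3) (Icc 1 d),
      Icc 2 (d + 2), Icc 3 (d + 3)} : Finset (Finset ℕ)).filter (d + 3 ∈ ·) =
      {insert (d + 3) (Icc 1 d), Icc 3 (d + 3)} := by
    simp [filter_insert, filter_singleton]
  have herase : (Icc 3 (d + 3)).erase (d + 3) = Icc 3 (d + 2) := by
    ext; simp; omega
  rw [intervalExample, linkC_genComplex, hfilter, image_insert, image_singleton,
    erase_insert (by simp), herase, genComplex_pair]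

theorem stmt13 (d : ℕ) (hd : 2 ≤ d) :
    linkC (intervalExample d) (d + 3) =
      (Finset.Icc 1 d).powerset ∪ (Finset.Icc 3 (d + 2)).powerset ∧
    facets (linkC (intervalExample d) (d + 3)) = {Finset.Icc 1 d, Finset.Icc 3 (d + 2)} ∧
    (Finset.Icc 1 d ∩ Finset.Icc 3 (d + 2)).card = d - 2 ∧
    ¬ Shellable (d - 1) (linkC (intervalExample d) (d + 3)) := by
  have h12 : ¬ Icc 1 d ⊆ Icc 3 (d + 2) := fun h => by simpa using h (by simp; omega : 1 ∈ Icc 1 d)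
  have h21 : ¬ Icc 3 (d + 2) ⊆ Icc 1 d := fun h => by simpa using h (by simp; omega : d + 2 ∈ _)
  have hfac : facets (linkC (intervalExample d) (d + 3)) = {Icc 1 d, Icc 3 (d + 2)} := by
    rw [linkC_intervalExample]
    exact facets_powerset_union_powerset h12 h21
  have hcap : (Icc 1 d ∩ Icc 3 (d + 2)).card = d - 2 := by
    rw [show Icc 1 d ∩ Icc 3 (d + 2) = Icc 3 d by ext; simp; omega, Nat.card_Icc]
    omega
  exact ⟨linkC_intervalExample d, hfac, hcap,
    not_shellable_of_facets_eq_pair hfac (fun h => h12 (h ▸ subset_rfl)) (by omega)⟩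
end

section
/- Let Δ be a pure d-dimensional complex on [n] with a unit interval order, let the facets be ordered lexicographically as F_1 < ... < F_m, and suppose F_{k+1} = {v_0 < v_1 < ... < v_d} has a gap at position i (i.e., there is x with v_{i-1} < x < v_i) with no gaps below position i (v_j = v_0 + j for j < i). Then for every subset v ⊆ {v_i,...,v_d} with |v| = d - i, the set {v_0,...,v_{i-1}, x} ∪ v is a facet of Δ that is lexicographically smaller than F_{k+1}. -/
open Finset

/-
The new face `T = {v₀, …, v_{i-1}, x} ∪ S` lies in the integer interval `[v₀, v_d]` spanned by
the facet `F = L[k+1]` and has `d + 1` elements, so it is a facet by the unit interval order.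
Below `x` the faces `T` and `F` agree (both contain exactly `v₀, …, v_{i-1}`), `x` lies in `T`
but not in `F`, and `F` still has the larger vertex `v_i`; so the sorted vertex lists first
differ where `T` reads `x` and `F` reads a larger vertex, whence `T` is lexicographically smaller.
-/

theorem List.lex_of_mem_of_notMem {α : Type*} [LinearOrder α] {l₁ l₂ : List α}
    (h₁ : l₁.Pairwise (· < ·)) (h₂ : l₂.Pairwise (· < ·)) {x : α} (hx₁ : x ∈ l₁)
    (hx₂ : x ∉ l₂) (hbelow : ∀ y < x, y ∈ l₁ ↔ y ∈ l₂) (hz : ∃ z ∈ l₂, x < z) :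
    List.Lex (· < ·) l₁ l₂ := by
  induction l₁ generalizing l₂ with
  | nil => simp at hx₁
  | cons a t₁ ih =>
    obtain ⟨z, hz, hxz⟩ := hz
    cases l₂ with
    | nil => simp at hz
    | cons b t₂ =>
      rw [List.pairwise_cons] at h₁ h₂
      have hax : a ≤ x := by
        rcases List.mem_cons.1 hx₁ with rfl | hx
        exacts [le_rfl, (h₁.1 x hx).le]
      rcases lt_trichotomy a b with hab | rfl | hba
      · exact .rel hab
      · have hxa : x ≠ a := by rintro rfl; simp at hx₂
        have ha₁ : a ∉ t₁ := fun h => lt_irrefl a (h₁.1 a h)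
        have ha₂ : a ∉ t₂ := fun h => lt_irrefl a (h₂.1 a h)
        refine .cons (ih h₁.2 h₂.2 ?_ (fun h => hx₂ (.tail _ h)) ?_ ⟨z, ?_, hxz⟩)
        · simpa [hxa] using hx₁
        · intro y hy
          by_cases hya : y = a
          · subst hya; exact iff_of_false ha₁ ha₂
          · simpa [hya] using hbelow y hy
        · simpa [(hax.trans_lt hxz).ne'] using hz
      · -- `b` lies below `x`, hence in `a :: t₁`, although every entry there is `≥ a > b`.
        have hb : b ∈ a :: t₁ := (hbelow b (hba.trans_le hax)).2 (.head _)
        rcases List.mem_cons.1 hb with rfl | hb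
        exacts [(lt_irrefl _ hba).elim, (lt_asymm hba (h₁.1 b hb)).elim]

theorem faceLexLt_of_mem_of_notMem {F G : Finset ℕ} {x : ℕ} (hxF : x ∈ F) (hxG : x ∉ G)
    (hbelow : ∀ y < x, y ∈ F ↔ y ∈ G) (hz : ∃ z ∈ G, x < z) : faceLexLt F G := by
  obtain ⟨z, hzG, hxz⟩ := hz
  exact List.lex_of_mem_of_notMem (sortedLT_sort F).pairwise (sortedLT_sort G).pairwise
    ((mem_sort _).2 hxF) (by simpa [sortedList] using hxG) (by simpa [sortedList] using hbelow)
    ⟨z, (mem_sort _).2 hzG, hxz⟩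

theorem LexFacetList.isFacet_of_mem {Δ : Finset (Finset ℕ)} {L : List (Finset ℕ)}
    (hL : LexFacetList Δ L) {F : Finset ℕ} (hF : F ∈ L) : IsFacet Δ F := by
  have hmem : F ∈ facets Δ := hL.2.1 ▸ List.mem_toFinset.2 hF
  exact mem_filter.1 hmem

theorem UnitIntervalOrder.isFacet_of_subset_Icc {d : ℕ} {Δ : Finset (Finset ℕ)}
    (hU : UnitIntervalOrder d Δ) {F T : Finset ℕ} (hF : IsFacet Δ F) {a b : ℕ} (ha : a ∈ F)
    (hb : b ∈ F) (hT : T ⊆ Icc a b) (hcard : T.card = d + 1) : IsFacet Δ T :=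
  hU F hF ⟨a, ha⟩ T (hT.trans (Icc_subset_Icc (min'_le F a ha) (le_max' F b hb))) hcard

section Insert

variable {α : Type*} [LinearOrder α] {A S : Finset α} {x : α}

theorem card_insert_union_of_lt_of_lt (hA : ∀ z ∈ A, z < x) (hS : ∀ z ∈ S, x < z) :
    (insert x (A ∪ S)).card = A.card + S.card + 1 := by
  have hdisj : Disjoint A S :=
    disjoint_left.2 fun z hzA hzS => lt_asymm (hA z hzA) (hS z hzS)
  have hx : x ∉ A ∪ S := by
    simp only [mem_union, not_or]
    exact ⟨fun h => lt_irrefl x (hA x h), fun h => lt_irrefl x (hS x h)⟩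
  rw [card_insert_of_notMem hx, card_union_of_disjoint hdisj]

theorem mem_insert_union_iff_of_lt (hS : ∀ z ∈ S, x < z) {y : α} (hy : y < x) :
    y ∈ insert x (A ∪ S) ↔ y ∈ A := by
  simp only [mem_insert, mem_union, hy.ne, false_or, or_iff_left_iff_imp]
  exact fun h => absurd (hS y h) (lt_asymm hy)

end Insert

section Gap

variable {d i x : ℕ} {v : ℕ → ℕ}

theorem image_range_subset_Icc (hv : MonotoneOn v (Set.Iic d)) :
    (range (d + 1)).image v ⊆ Icc (v 0) (v d) := by
  intro z hz
  obtain ⟨j, hj, rfl⟩ := mem_image.1 hz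
  have hj : j ≤ d := Nat.lt_succ_iff.1 (mem_range.1 hj)
  exact mem_Icc.2 ⟨hv (Nat.zero_le d) hj j.zero_le, hv hj (Set.mem_Iic.2 le_rfl) hj⟩

theorem card_image_range_of_strictMonoOn (hv : StrictMonoOn v (Set.Iic d)) (hi : i ≤ d + 1) :
    ((range i).image v).card = i := by
  rw [card_image_of_injOn (hv.injOn.mono fun j hj => ?_), card_range]
  simp only [coe_range, Set.mem_Iio, Set.mem_Iic] at hj ⊢
  omega

structure IsGapAt (v : ℕ → ℕ) (d i x : ℕ) : Prop where
  strictMonoOn : StrictMonoOn v (Set.Iic d)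
  le : i ≤ d
  apply_pred_lt : v (i - 1) < x
  lt_apply : x < v i

namespace IsGapAt

variable (h : IsGapAt v d i x)
include h

theorem apply_lt_iff {j : ℕ} (hj : j ≤ d) : v j < x ↔ j < i := by
  constructor
  · intro hjx
    by_contra! hij
    exact lt_asymm hjx (h.lt_apply.trans_le (h.strictMonoOn.monotoneOn h.le hj hij))
  · intro hji
    exact (h.strictMonoOn.monotoneOn hj (show i - 1 ≤ d by have := h.le; omega)
      (by omega)).trans_lt h.apply_pred_lt

theorem lt_apply_iff {j : ℕ} (hj : j ≤ d) : x < v j ↔ i ≤ j := by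
  constructor
  · intro hxj
    by_contra! hji
    exact lt_asymm hxj ((h.apply_lt_iff hj).2 hji)
  · exact fun hij => h.lt_apply.trans_le (h.strictMonoOn.monotoneOn h.le hj hij)

theorem lt_of_mem_image_range {z : ℕ} (hz : z ∈ (range i).image v) : z < x := by
  obtain ⟨j, hj, rfl⟩ := mem_image.1 hz
  have hj := mem_range.1 hj
  exact (h.apply_lt_iff (by have := h.le; omega)).2 hj

theorem lt_of_mem_image_Icc {z : ℕ} (hz : z ∈ (Icc i d).image v) : x < z := by
  obtain ⟨j, hj, rfl⟩ := mem_image.1 hz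
  exact (h.lt_apply_iff (mem_Icc.1 hj).2).2 (mem_Icc.1 hj).1

theorem mem_Icc : x ∈ Icc (v 0) (v d) :=
  Finset.mem_Icc.2 ⟨(h.strictMonoOn.monotoneOn (Nat.zero_le d)
    (show i - 1 ≤ d by have := h.le; omega) (Nat.zero_le _)).trans h.apply_pred_lt.le,
    h.lt_apply.le.trans (h.strictMonoOn.monotoneOn h.le (Set.mem_Iic.2 le_rfl) h.le)⟩

theorem notMem_image_range : x ∉ (range (d + 1)).image v := by
  simp only [mem_image, mem_range, not_exists, not_and]
  intro j hj hjx
  have hlt := h.apply_lt_iff (Nat.lt_succ_iff.1 hj)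
  have hgt := h.lt_apply_iff (Nat.lt_succ_iff.1 hj)
  rw [hjx, iff_false_left (lt_irrefl x)] at hlt hgt
  omega

theorem mem_image_range_iff {y : ℕ} (hy : y < x) :
    y ∈ (range (d + 1)).image v ↔ y ∈ (range i).image v := by
  simp only [mem_image, mem_range]
  constructor
  · rintro ⟨j, hj, rfl⟩
    exact ⟨j, (h.apply_lt_iff (Nat.lt_succ_iff.1 hj)).1 hy, rfl⟩
  · rintro ⟨j, hj, rfl⟩
    exact ⟨j, by have := h.le; omega, rfl⟩

end IsGapAt

end Gap

theorem stmt19_general (d k : ℕ) (Δ : Finset (Finset ℕ))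
    (hU : UnitIntervalOrder d Δ)
    (L : List (Finset ℕ)) (hL : LexFacetList Δ L) (hk : k + 1 < L.length)
    (v : ℕ → ℕ) (hmono : ∀ a b : ℕ, a < b → b ≤ d → v a < v b)
    (hF : L.get ⟨k + 1, hk⟩ = (Finset.range (d + 1)).image v)
    (i x : ℕ) (hid : i ≤ d)
    (hgap1 : v (i - 1) < x) (hgap2 : x < v i) :
    ∀ S ⊆ (Finset.Icc i d).image v, S.card = d - i →
      IsFacet Δ (insert x ((Finset.range i).image v ∪ S)) ∧
      faceLexLt (insert x ((Finset.range i).image v ∪ S)) (L.get ⟨k + 1, hk⟩) := by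
  intro S hS hScard
  have hv : StrictMonoOn v (Set.Iic d) := fun a _ b hb hab => hmono a b hab hb
  have hgap : IsGapAt v d i x := ⟨hv, hid, hgap1, hgap2⟩
  have hS' : ∀ z ∈ S, x < z := fun z hz => hgap.lt_of_mem_image_Icc (hS hz)
  have hcard : (insert x ((range i).image v ∪ S)).card = d + 1 := by
    rw [card_insert_union_of_lt_of_lt (fun z => hgap.lt_of_mem_image_range) hS',
      card_image_range_of_strictMonoOn hv (by omega), hScard]
    omega
  have hAS : (range i).image v ∪ S ⊆ (range (d + 1)).image v :=
    union_subset (image_subset_image (range_subset_range.2 (by omega)))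
      (hS.trans (image_subset_image fun j hj => by
        simp only [Finset.mem_Icc, mem_range] at hj ⊢; omega))
  have hFfacet : IsFacet Δ ((range (d + 1)).image v) := hF ▸ hL.isFacet_of_mem (L.get_mem _)
  have hvF : ∀ j ≤ d, v j ∈ (range (d + 1)).image v := fun j hj =>
    mem_image_of_mem v (mem_range.2 (by omega))
  refine ⟨hU.isFacet_of_subset_Icc hFfacet (hvF 0 d.zero_le) (hvF d le_rfl)
    (insert_subset hgap.mem_Icc (hAS.trans (image_range_subset_Icc hv.monotoneOn))) hcard, ?_⟩
  rw [hF]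
  refine faceLexLt_of_mem_of_notMem (mem_insert_self _ _) hgap.notMem_image_range
    (fun y hy => ?_) ⟨v i, hvF i hid, hgap2⟩
  rw [mem_insert_union_iff_of_lt hS' hy, hgap.mem_image_range_iff hy]

theorem stmt19 (d k : ℕ) (Δ : Finset (Finset ℕ))
    (hC : IsComplex Δ) (hP : IsPure d Δ) (hU : UnitIntervalOrder d Δ)
    (L : List (Finset ℕ)) (hL : LexFacetList Δ L) (hk : k + 1 < L.length)
    (v : ℕ → ℕ) (hmono : ∀ a b : ℕ, a < b → b ≤ d → v a < v b)
    (hF : L.get ⟨k + 1, hk⟩ = (Finset.range (d + 1)).image v)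
    (i x : ℕ) (hi1 : 1 ≤ i) (hid : i ≤ d)
    (hgap1 : v (i - 1) < x) (hgap2 : x < v i)
    (hnolow : ∀ j < i, v j = v 0 + j) :
    ∀ S ⊆ (Finset.Icc i d).image v, S.card = d - i →
      IsFacet Δ (insert x ((Finset.range i).image v ∪ S)) ∧
      faceLexLt (insert x ((Finset.range i).image v ∪ S)) (L.get ⟨k + 1, hk⟩) :=
  stmt19_general d k Δ hU L hL hk v hmono hF i x hid hgap1 hgap2
end
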